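/- arXiv:1505.02610 — 4 statements merged into one kernel-verified Lean document; each statement's English description precedes it below -/
import Mathlib

section
/- Let V be a finite-dimensional vector space over a field K and let v, w : Fin n → V be two bases of V. Then there exists a permutation σ of Fin n such that for every i, the family obtained from v by replacing v i with w (σ i) (i.e. Function.update v i (w (σ i))) is again a basis of V. -/
/-!
Write `M` for the matrix of `w` in the basis `v`. Since `det M ≠ 0`, some term of the Leibniz
expansion of `det M` is nonzero, i.e. there is a permutation `σ` with `M i (σ i) ≠ 0` for all `i`.
Replacing `v i` by `w (σ i)` changes the determinant relative to `v` into the coordinate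
`M i (σ i)` (Cramer's rule), so the updated family is again a basis.
-/

open Function

theorem Matrix.exists_perm_forall_ne_zero_of_det_ne_zero {n R : Type*} [Fintype n] [DecidableEq n]
    [CommRing R] {A : Matrix n n R} (hA : A.det ≠ 0) :
    ∃ σ : Equiv.Perm n, ∀ i, A i (σ i) ≠ 0 := by
  by_contra! h
  apply hA
  rw [← Matrix.det_transpose, Matrix.det_apply]
  refine Finset.sum_eq_zero fun σ _ => ?_
  obtain ⟨i, hi⟩ := h σ
  rw [Finset.prod_eq_zero (Finset.mem_univ i) hi, smul_zero]

namespace Module.Basis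

variable {ι R M : Type*} [Fintype ι] [DecidableEq ι] [CommRing R] [AddCommGroup M] [Module R M]

theorem det_update_self (b : Basis ι R M) (i : ι) (x : M) :
    b.det (update b i x) = b.repr x i := by
  rw [det_apply, toMatrix_update, toMatrix_self, ← Matrix.cramer_apply, Matrix.cramer_one]
  rfl

noncomputable def exchange (b : Basis ι R M) (i : ι) (x : M) (hx : IsUnit (b.repr x i)) :
    Basis ι R M :=
  have hdet : IsUnit (b.det (update b i x)) := by rwa [det_update_self]
  Basis.mk (is_basis_iff_det b |>.mpr hdet).1 (is_basis_iff_det b |>.mpr hdet).2.ge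

@[simp]
theorem coe_exchange (b : Basis ι R M) (i : ι) (x : M) (hx : IsUnit (b.repr x i)) :
    ⇑(b.exchange i x hx) = update b i x := by
  rw [exchange, coe_mk]

end Module.Basis

/-- **Basis exchange with a permutation.**
Given two bases `v, w : Fin n → V` of a vector space `V` over a field `K`,
there is a permutation `σ` of `Fin n` such that for every `i`, replacing `v i`
by `w (σ i)` in the family `v` again yields a basis of `V`. -/
theorem basis_exchange_perm {K V : Type*} [Field K] [AddCommGroup V] [Module K V]
    {n : ℕ} (v w : Module.Basis (Fin n) K V) :
    ∃ σ : Equiv.Perm (Fin n), ∀ i : Fin n,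
      ∃ b : Module.Basis (Fin n) K V, ⇑b = Function.update (⇑v) i (w (σ i)) := by
  have hdet : (v.toMatrix w).det ≠ 0 := by
    simpa only [Module.Basis.det_apply] using (v.isUnit_det w).ne_zero
  obtain ⟨σ, hσ⟩ := Matrix.exists_perm_forall_ne_zero_of_det_ne_zero hdet
  refine ⟨σ, fun i => ⟨v.exchange i (w (σ i)) (isUnit_iff_ne_zero.mpr ?_), v.coe_exchange ..⟩⟩
  simpa only [Module.Basis.toMatrix_apply] using hσ i
end

section
/- Let G be a finite connected simple graph, let T₁ and T₂ be spanning trees of G, let Λ be a linearly ordered additive commutative group, and let w be a function from the edges of G to Λ. If ∑_{e ∈ E(T₁)} w(e) < ∑_{f ∈ E(T₂)} w(f), then there exist an edge e of T₁ and an edge f of T₂ with w(e) < w(f) such that the spanning subgraph with edge set (E(T₁) ∖ {e}) ∪ {f} is again a spanning tree of G. -/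
/-!
Spanning trees have the symmetric exchange property: for `e ∈ T₁ \ T₂` there is `f ∈ T₂ \ T₁`
such that both `T₁ - e + f` and `T₂ - f + e` are trees; take for `f` an edge where the `T₂`-path
between the ends of `e` crosses between the two components of `T₁ - e`. If `w e < w f` we are done.
Otherwise `T₂ - f + e` is at least as heavy as `T₂` and one edge closer to `T₁`, so induction on
`|T₂ \ T₁|` gives a good swap `e', f'` for it, and `f'` is an edge of `T₂`: `f' = e` would make
`T₁ - e' + e` a spanning tree properly contained in `T₁`.
-/

def SymmetricExchange {α : Type*} [DecidableEq α] (𝓑 : Set (Finset α)) : Prop :=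
  ∀ B₁ ∈ 𝓑, ∀ B₂ ∈ 𝓑, ∀ e ∈ B₁ \ B₂,
    ∃ f ∈ B₂ \ B₁, insert f (B₁.erase e) ∈ 𝓑 ∧ insert e (B₂.erase f) ∈ 𝓑

namespace SymmetricExchange

open Finset

variable {α : Type*} [DecidableEq α] {𝓑 : Set (Finset α)} {B₁ B₂ : Finset α}

theorem eq_of_subset (h𝓑 : SymmetricExchange 𝓑) (h₁ : B₁ ∈ 𝓑) (h₂ : B₂ ∈ 𝓑) (hsub : B₁ ⊆ B₂) :
    B₁ = B₂ := by
  by_contra hne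
  obtain ⟨e, he⟩ := sdiff_nonempty.mpr fun h => hne (hsub.antisymm h)
  obtain ⟨f, hf, -⟩ := h𝓑 B₂ h₂ B₁ h₁ e he
  exact (mem_sdiff.mp hf).2 (hsub (mem_sdiff.mp hf).1)

theorem exists_exchange_lt_of_sum_lt {Λ : Type*} [AddCommMonoid Λ] [LinearOrder Λ]
    [IsOrderedAddMonoid Λ] (h𝓑 : SymmetricExchange 𝓑) (w : α → Λ) (h₁ : B₁ ∈ 𝓑) (h₂ : B₂ ∈ 𝓑)
    (hlt : ∑ e ∈ B₁, w e < ∑ f ∈ B₂, w f) :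
    ∃ e ∈ B₁, ∃ f ∈ B₂, w e < w f ∧ insert f (B₁.erase e) ∈ 𝓑 := by
  induction hn : #(B₂ \ B₁) using Nat.strong_induction_on generalizing B₂ with
  | _ n ih =>
  obtain ⟨e, he⟩ : (B₁ \ B₂).Nonempty := sdiff_nonempty.mpr fun hsub =>
    (h𝓑.eq_of_subset h₁ h₂ hsub ▸ hlt).false
  obtain ⟨f, hf, hswap₁, hswap₂⟩ := h𝓑 B₁ h₁ B₂ h₂ e he
  rw [mem_sdiff] at he hf
  by_cases hw : w e < w f
  · exact ⟨e, he.1, f, hf.1, hw, hswap₁⟩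
  set B₂' := insert e (B₂.erase f)
  have hcard : #(B₂' \ B₁) < n := by
    rw [← hn]
    have hdiff : B₂' \ B₁ = (B₂ \ B₁).erase f := by
      ext g
      simp only [B₂', mem_sdiff, mem_insert, mem_erase]
      grind
    exact hdiff ▸ card_erase_lt_of_mem (mem_sdiff.mpr hf)
  have hsum : ∑ f ∈ B₂, w f ≤ ∑ f ∈ B₂', w f := by
    rw [sum_insert (by simp [he.2]), ← add_sum_erase B₂ w hf.1]
    exact add_le_add_left (not_lt.mp hw) _
  obtain ⟨e', he', f', hf', hw', hswap⟩ := ih _ hcard hswap₂ (hlt.trans_le hsum) rfl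
  refine ⟨e', he', f', ?_, hw', hswap⟩
  rcases mem_insert.mp hf' with rfl | hf'
  · have hne : e' ≠ f' := by rintro rfl; exact hw'.false
    have hB₁ := h𝓑.eq_of_subset hswap h₁ (insert_subset he.1 (erase_subset _ _))
    have : e' ∈ insert f' (B₁.erase e') := by rwa [hB₁]
    simp [hne] at this
  · exact mem_of_mem_erase hf'

end SymmetricExchange

namespace SimpleGraph

variable {V : Type*} {G H T T₁ T₂ : SimpleGraph V}

theorem Walk.reachable_deleteEdges_or_exists_mem {u v : V} (p : G.Walk v u) (e : Sym2 V) :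
    (G.deleteEdges {e}).Reachable v u ∨ ∃ x ∈ e, (G.deleteEdges {e}).Reachable v x := by
  induction p with
  | nil => exact .inl .rfl
  | @cons v w _ hadj _ ih =>
    by_cases he : s(v, w) = e
    · exact .inr ⟨v, he ▸ Sym2.mem_mk_left v w, .rfl⟩
    · have hadj' : (G.deleteEdges {e}).Adj v w := by simp [hadj, he]
      exact ih.imp hadj'.reachable.trans fun ⟨x, hx, hwx⟩ => ⟨x, hx, hadj'.reachable.trans hwx⟩

theorem Preconnected.reachable_deleteEdges_or (hG : G.Preconnected) (v a b : V) :
    (G.deleteEdges {s(a, b)}).Reachable v a ∨ (G.deleteEdges {s(a, b)}).Reachable v b := by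
  rcases (hG v a).some.reachable_deleteEdges_or_exists_mem s(a, b) with hva | ⟨x, hx, hvx⟩
  · exact .inl hva
  · rcases Sym2.mem_iff.mp hx with rfl | rfl
    exacts [.inl hvx, .inr hvx]

theorem IsAcyclic.not_reachable_deleteEdges_of_mem_edges (hT : T.IsAcyclic) {u v : V}
    {p : T.Walk u v} (hp : p.IsPath) {e : Sym2 V} (he : e ∈ p.edges) :
    ¬ (T.deleteEdges {e}).Reachable u v := by
  classical
  rintro ⟨q⟩
  have hq : (q.bypass.mapLe (T.deleteEdges_le {e})).IsPath := q.bypass_isPath.mapLe _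
  have hpq : p = q.bypass.mapLe _ :=
    congrArg Subtype.val ((hT.subsingleton_path u v).elim ⟨p, hp⟩ ⟨_, hq⟩)
  rw [hpq, Walk.edges_mapLe_eq_edges] at he
  simpa using q.bypass.edges_subset_edgeSet he

theorem isTree_sup_edge {c d : V} (hH : H.IsAcyclic) (hcd : ¬ H.Reachable c d)
    (hcover : ∀ v, H.Reachable v c ∨ H.Reachable v d) : (H ⊔ edge c d).IsTree := by
  refine ⟨(connected_iff_exists_forall_reachable _).mpr ⟨c, fun v => ?_⟩,
    hH.sup_edge_of_not_reachable hcd⟩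
  have hdc : (H ⊔ edge c d).Adj d c := by
    simp [edge_adj, show d ≠ c by rintro rfl; exact hcd .rfl]
  rcases hcover v with hvc | hvd
  · exact (hvc.mono le_sup_left).symm
  · exact ((hvd.mono le_sup_left).trans hdc.reachable).symm

theorem IsTree.isTree_deleteEdges_sup_edge (hT : T.IsTree) {e : Sym2 V} {c d : V}
    (hcd : ¬ (T.deleteEdges {e}).Reachable c d) : (T.deleteEdges {e} ⊔ edge c d).IsTree := by
  induction e with
  | _ a b =>
  -- `T - s(a, b)` has at most the two components of `a` and `b`, which `c` and `d` must separate.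
  have hab := hT.connected.preconnected.reachable_deleteEdges_or (a := a) (b := b)
  refine isTree_sup_edge (hT.isAcyclic.anti (deleteEdges_le _)) hcd fun v => ?_
  rcases hab v with hv | hv <;> rcases hab c with hc | hc <;> rcases hab d with hd | hd
  all_goals first
    | exact .inl (hv.trans hc.symm) | exact .inr (hv.trans hd.symm)
    | exact absurd (hc.trans hd.symm) hcd

theorem fromEdgeSet_insert_sdiff (e : Sym2 V) (c d : V) :
    fromEdgeSet (insert s(c, d) (G.edgeSet \ {e})) = G.deleteEdges {e} ⊔ edge c d := by
  rw [edge, ← fromEdgeSet_edgeSet (G.deleteEdges {e}), ← fromEdgeSet_union, edgeSet_deleteEdges,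
    Set.insert_eq, Set.union_comm]

theorem edgeSet_fromEdgeSet_insert_sdiff {e f : Sym2 V} (hf : ¬ f.IsDiag) :
    (fromEdgeSet (insert f (G.edgeSet \ {e}))).edgeSet = insert f (G.edgeSet \ {e}) := by
  rw [edgeSet_fromEdgeSet, sdiff_eq_left, Set.disjoint_left]
  rintro g (rfl | ⟨hg, -⟩)
  exacts [hf, G.not_isDiag_of_mem_edgeSet hg]

theorem IsTree.exists_symm_exchange (h₁ : T₁.IsTree) (h₂ : T₂.IsTree) {e : Sym2 V}
    (he₁ : e ∈ T₁.edgeSet) (he₂ : e ∉ T₂.edgeSet) :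
    ∃ f ∈ T₂.edgeSet, f ∉ T₁.edgeSet ∧ (fromEdgeSet (insert f (T₁.edgeSet \ {e}))).IsTree ∧
      (fromEdgeSet (insert e (T₂.edgeSet \ {f}))).IsTree := by
  induction e with
  | _ x y =>
  set D := T₁.deleteEdges {s(x, y)}
  have hxy : ¬ D.Reachable x y := isAcyclic_iff_forall_isBridge.mp h₁.isAcyclic he₁
  obtain ⟨p, hp, -⟩ := h₂.existsUnique_path x y
  obtain ⟨⟨⟨a, b⟩, hab⟩, hd, ha, hb⟩ :=
    p.exists_boundary_dart {v | D.Reachable v x} .rfl fun hyx => hxy hyx.symm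
  have hD : ¬ D.Reachable a b := fun hr => hb (hr.symm.trans ha)
  refine ⟨s(a, b), hab, fun habT₁ => hD (Adj.reachable ?_), ?_, ?_⟩
  · exact (deleteEdges_adj ..).mpr ⟨habT₁, fun h => he₂ (h ▸ hab)⟩
  · rw [fromEdgeSet_insert_sdiff]
    exact h₁.isTree_deleteEdges_sup_edge hD
  · rw [fromEdgeSet_insert_sdiff]
    refine h₂.isTree_deleteEdges_sup_edge (h₂.isAcyclic.not_reachable_deleteEdges_of_mem_edges hp ?_)
    exact p.edges_eq_map_darts ▸ List.mem_map_of_mem hd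

def treeEdgeFinsets (V : Type*) : Set (Finset (Sym2 V)) :=
  {B | ∃ T : SimpleGraph V, T.IsTree ∧ T.edgeSet = B}

theorem symmetricExchange_treeEdgeFinsets [DecidableEq V] :
    SymmetricExchange (treeEdgeFinsets V) := by
  rintro B₁ ⟨T₁, h₁, hB₁⟩ B₂ ⟨T₂, h₂, hB₂⟩ e he
  rw [Finset.mem_sdiff, ← Finset.mem_coe, ← Finset.mem_coe, ← hB₁, ← hB₂] at he
  obtain ⟨f, hf₂, hf₁, hT₁', hT₂'⟩ := h₁.exists_symm_exchange h₂ he.1 he.2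
  refine ⟨f, ?_, ⟨_, hT₁', ?_⟩, ⟨_, hT₂', ?_⟩⟩
  · rw [Finset.mem_sdiff, ← Finset.mem_coe, ← Finset.mem_coe, ← hB₁, ← hB₂]
    exact ⟨hf₂, hf₁⟩
  · rw [edgeSet_fromEdgeSet_insert_sdiff (T₂.not_isDiag_of_mem_edgeSet hf₂), Finset.coe_insert,
      Finset.coe_erase, hB₁]
  · rw [edgeSet_fromEdgeSet_insert_sdiff (T₁.not_isDiag_of_mem_edgeSet he.1), Finset.coe_insert,
      Finset.coe_erase, hB₂]

end SimpleGraph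

theorem exists_norm_decreasing_swap_general {V : Type*}
    (T₁ T₂ : SimpleGraph V)
    (hT₁ : T₁.IsTree) (hT₂ : T₂.IsTree)
    {Λ : Type*} [AddCommGroup Λ] [LinearOrder Λ] [IsOrderedAddMonoid Λ] (w : Sym2 V → Λ)
    [Fintype T₁.edgeSet] [Fintype T₂.edgeSet]
    (hlt : ∑ e : T₁.edgeSet, w e < ∑ f : T₂.edgeSet, w f) :
    ∃ e ∈ T₁.edgeSet, ∃ f ∈ T₂.edgeSet, w e < w f ∧
      (SimpleGraph.fromEdgeSet ((T₁.edgeSet \ {e}) ∪ {f})).IsTree := by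
  classical
  obtain ⟨e, he, f, hf, hwef, T, hT, hTE⟩ :=
    SimpleGraph.symmetricExchange_treeEdgeFinsets.exists_exchange_lt_of_sum_lt w
      ⟨T₁, hT₁, T₁.coe_edgeFinset.symm⟩ ⟨T₂, hT₂, T₂.coe_edgeFinset.symm⟩
      (by rwa [Finset.sum_set_coe, Finset.sum_set_coe] at hlt)
  rw [SimpleGraph.mem_edgeFinset] at he hf
  refine ⟨e, he, f, hf, hwef, ?_⟩
  rwa [Set.union_singleton, ← SimpleGraph.coe_edgeFinset, ← Finset.coe_erase, ← Finset.coe_insert,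
    ← hTE, SimpleGraph.fromEdgeSet_edgeSet]

/-- **Norm-decreasing edge swap (combinatorial Factorization Lemma).**
If `T₁` and `T₂` are spanning trees of a finite connected simple graph `G` and the
total `w`-weight of `T₁` is smaller than that of `T₂`, then there are edges
`e ∈ T₁` and `f ∈ T₂` with `w e < w f` such that exchanging `e` for `f` in `T₁`
again gives a spanning tree of `G`. -/
theorem exists_norm_decreasing_swap {V : Type*} [Fintype V]
    (G : SimpleGraph V) (hG : G.Connected)
    (T₁ T₂ : SimpleGraph V) (hT₁G : T₁ ≤ G) (hT₂G : T₂ ≤ G)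
    (hT₁ : T₁.IsTree) (hT₂ : T₂.IsTree)
    {Λ : Type*} [AddCommGroup Λ] [LinearOrder Λ] [IsOrderedAddMonoid Λ] (w : Sym2 V → Λ)
    [Fintype T₁.edgeSet] [Fintype T₂.edgeSet]
    (hlt : ∑ e : T₁.edgeSet, w e < ∑ f : T₂.edgeSet, w f) :
    ∃ e ∈ T₁.edgeSet, ∃ f ∈ T₂.edgeSet, w e < w f ∧
      (SimpleGraph.fromEdgeSet ((T₁.edgeSet \ {e}) ∪ {f})).IsTree :=
  exists_norm_decreasing_swap_general T₁ T₂ hT₁ hT₂ w hlt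
end

section
/- For all finite subsets A and B of H, writing Aᶜ = H ∖ A, one has cut(A ∩ B) + cut(A ∪ B) + cut(Aᶜ ∩ B) + cut(Aᶜ ∪ B) ≤ 2·cut(A) + 2·cut(B). -/
open Finset

/-- `cut d A = ∑_{x ∈ A} ∑_{y ∉ A} d x y`, the total weight of pairs
separated by the partition `{A, H ∖ A}`. -/
def cut {H : Type*} [Fintype H] [DecidableEq H] {Λ : Type*}
    [AddCommGroup Λ] [LinearOrder Λ] [IsOrderedAddMonoid Λ] (d : H → H → Λ) (A : Finset H) : Λ :=
  ∑ x ∈ A, ∑ y ∈ Aᶜ, d x y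

/-! `cut` is submodular. Submodularity for `(A, B)` and for `(Aᶜ, B)`, together with
`cut Aᶜ = cut A` (symmetry of `d`), adds up to the four-term inequality. -/

section

variable {H : Type*} [Fintype H] [DecidableEq H] {Λ : Type*}
  [AddCommGroup Λ] [LinearOrder Λ] [IsOrderedAddMonoid Λ] (d : H → H → Λ)

lemma cut_eq_sum_univ (A : Finset H) :
    cut d A = ∑ x, ∑ y, if x ∈ A ∧ y ∉ A then d x y else 0 := by
  simp only [cut, ite_and, ← mem_compl, sum_ite_irrel, sum_const_zero, sum_ite_mem, univ_inter]

lemma cut_compl (hsymm : ∀ x y, d x y = d y x) (A : Finset H) : cut d Aᶜ = cut d A := by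
  rw [cut, cut, compl_compl, sum_comm]
  exact sum_congr rfl fun x _ => sum_congr rfl fun y _ => hsymm y x

/- Pair by pair: an ordered pair separated by `A ∩ B` or by `A ∪ B` is separated by `A` or by `B`,
and one separated by both is separated by both `A` and `B`. -/
lemma cut_inter_add_cut_union_le (hnonneg : ∀ x y, 0 ≤ d x y) (A B : Finset H) :
    cut d (A ∩ B) + cut d (A ∪ B) ≤ cut d A + cut d B := by
  simp only [cut_eq_sum_univ, ← sum_add_distrib]
  refine sum_le_sum fun x _ => sum_le_sum fun y _ => ?_
  by_cases hxA : x ∈ A <;> by_cases hxB : x ∈ B <;> by_cases hyA : y ∈ A <;>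
    by_cases hyB : y ∈ B <;> simp [hxA, hxB, hyA, hyB, hnonneg]

end

/-- The doubled submodularity inequality:
`cut (A ∩ B) + cut (A ∪ B) + cut (Aᶜ ∩ B) + cut (Aᶜ ∪ B) ≤ 2·cut A + 2·cut B`. -/
theorem cut_four_term_ineq {H : Type*} [Fintype H] [DecidableEq H] {Λ : Type*}
    [AddCommGroup Λ] [LinearOrder Λ] [IsOrderedAddMonoid Λ] (d : H → H → Λ)
    (hsymm : ∀ x y, d x y = d y x) (hnonneg : ∀ x y, 0 ≤ d x y)
    (A B : Finset H) :
    cut d (A ∩ B) + cut d (A ∪ B) + cut d (Aᶜ ∩ B) + cut d (Aᶜ ∪ B) ≤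
      2 • cut d A + 2 • cut d B := by
  have hA := cut_inter_add_cut_union_le d hnonneg A B
  have hAc := cut_inter_add_cut_union_le d hnonneg Aᶜ B
  rw [cut_compl d hsymm] at hAc
  calc cut d (A ∩ B) + cut d (A ∪ B) + cut d (Aᶜ ∩ B) + cut d (Aᶜ ∪ B)
      = (cut d (A ∩ B) + cut d (A ∪ B)) + (cut d (Aᶜ ∩ B) + cut d (Aᶜ ∪ B)) := add_assoc _ _ _
    _ ≤ (cut d A + cut d B) + (cut d A + cut d B) := add_le_add hA hAc
    _ = 2 • cut d A + 2 • cut d B := by rw [two_nsmul, two_nsmul, add_add_add_comm]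
end

section
/- Let α be a type with distinct elements i ≠ j, and let u be an element of the free group on α. If the element (of i) * u * (of j) * u⁻¹ is conjugate to an element whose reduced word has length at most 2, then there exist integers k and m with u = (of i)^k * (of j)^m; consequently u * (of j) * u⁻¹ = (of i)^k * (of j) * (of i)^(−k). -/
/-!
Write `u = of i ^ k * v * of j ^ m` with `v` of minimal length. Then the reduced word of `v`
neither starts with `i^±1` nor ends with `j^±1`, so `of i * v * of j * v⁻¹` is spelled by the
word `i v j v⁻¹` without any cancellation, even cyclically; it has length `2 |v| + 2` and is
conjugate to `of i * u * of j * u⁻¹`. A cyclically reduced element is a shortest element of its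
conjugacy class, because the length of its `n`-th power grows like `n` times its length, whereas
conjugation changes lengths of powers by a bounded amount. Hence `2 |v| + 2 ≤ 2` and `v = 1`.
-/

namespace FreeGroup

variable {α : Type*}

theorem head?_invRev (L : List (α × Bool)) :
    (invRev L).head? = L.getLast?.map fun p ↦ (p.1, !p.2) := by
  simp [invRev, List.head?_reverse, List.getLast?_map]

theorem getLast?_invRev (L : List (α × Bool)) :
    (invRev L).getLast? = L.head?.map fun p ↦ (p.1, !p.2) := by
  simp [invRev, List.getLast?_reverse, List.head?_map]

theorem mk_singleton_mem_zpowers (x : α) (b : Bool) : mk [(x, b)] ∈ Subgroup.zpowers (of x) := by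
  cases b
  · rw [show mk [(x, false)] = (of x)⁻¹ by simp [of, inv_mk, invRev]]
    exact inv_mem (Subgroup.mem_zpowers _)
  · exact Subgroup.mem_zpowers (of x)

variable [DecidableEq α]

theorem norm_pow_le (x : FreeGroup α) (n : ℕ) : (x ^ n).norm ≤ n * x.norm := by
  induction n with
  | zero => simp [norm_one]
  | succ n ih =>
    rw [pow_succ, add_one_mul]
    exact (norm_mul_le _ _).trans (by omega)

theorem norm_pow_of_isCyclicallyReduced {x : FreeGroup α} (hx : IsCyclicallyReduced x.toWord)
    (n : ℕ) : (x ^ n).norm = n * x.norm := by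
  rw [norm, toWord_pow, (hx.flatten_replicate n).isReduced.reduce_eq]
  simp [norm]

theorem norm_le_of_isConj_of_isCyclicallyReduced {g x : FreeGroup α} (hgx : IsConj g x)
    (hx : IsCyclicallyReduced x.toWord) : x.norm ≤ g.norm := by
  obtain ⟨c, rfl⟩ := isConj_iff.1 hgx
  set n := 2 * c.norm + 1
  have key : n * (c * g * c⁻¹).norm ≤ n * g.norm + 2 * c.norm :=
    calc n * (c * g * c⁻¹).norm = ((c * g * c⁻¹) ^ n).norm :=
          (norm_pow_of_isCyclicallyReduced hx n).symm
      _ = (c * g ^ n * c⁻¹).norm := by rw [conj_pow]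
      _ ≤ c.norm + (g ^ n).norm + c.norm := by
          grw [norm_mul_le, norm_mul_le, norm_inv_eq]
      _ ≤ n * g.norm + 2 * c.norm := by grw [norm_pow_le]; omega
  by_contra! hlt
  have := Nat.mul_le_mul_left n hlt
  rw [Nat.mul_succ] at this
  omega

theorem IsReduced.invRev {L : List (α × Bool)} (hL : IsReduced L) : IsReduced (invRev L) := by
  rw [isReduced_iff_reduce_eq, reduce_invRev, hL.reduce_eq]

theorem isCyclicallyReduced_cons_append_cons_invRev {L : List (α × Bool)} (hL : IsReduced L)
    {x y : α} (hx : ∀ p ∈ L.head?, p.1 ≠ x) (hy : ∀ p ∈ L.getLast?, p.1 ≠ y) :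
    IsCyclicallyReduced ((x, true) :: L ++ (y, true) :: invRev L) := by
  have hinv := hL.invRev
  simp only [IsCyclicallyReduced, IsReduced, List.cons_append, List.isChain_cons,
    List.isChain_append] at *
  refine ⟨⟨?_, hL, ⟨?_, hinv⟩, ?_⟩, ?_⟩
  · cases h : L.head? <;> grind [List.head?_append]
  · cases h : L.getLast? <;> grind [head?_invRev]
  · cases h : L.getLast? <;> grind
  · cases h : L.head? <;> grind [List.getLast?_cons, List.getLast?_append, getLast?_invRev]

theorem toWord_of_mul_mul_of_mul_inv (v : FreeGroup α) {x y : α}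
    (hx : ∀ p ∈ v.toWord.head?, p.1 ≠ x) (hy : ∀ p ∈ v.toWord.getLast?, p.1 ≠ y) :
    (of x * v * of y * v⁻¹).toWord = (x, true) :: v.toWord ++ (y, true) :: invRev v.toWord := by
  have hcr := isCyclicallyReduced_cons_append_cons_invRev isReduced_toWord hx hy
  conv_lhs => rw [← mk_toWord (x := v), inv_mk, of, of, mul_mk, mul_mk, mul_mk, toWord_mk]
  simpa using hcr.isReduced.reduce_eq

theorem isCyclicallyReduced_toWord_of_mul_mul_of_mul_inv (v : FreeGroup α) {x y : α}
    (hx : ∀ p ∈ v.toWord.head?, p.1 ≠ x) (hy : ∀ p ∈ v.toWord.getLast?, p.1 ≠ y) :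
    IsCyclicallyReduced (of x * v * of y * v⁻¹).toWord := by
  rw [toWord_of_mul_mul_of_mul_inv v hx hy]
  exact isCyclicallyReduced_cons_append_cons_invRev isReduced_toWord hx hy

theorem norm_of_mul_mul_of_mul_inv (v : FreeGroup α) {x y : α}
    (hx : ∀ p ∈ v.toWord.head?, p.1 ≠ x) (hy : ∀ p ∈ v.toWord.getLast?, p.1 ≠ y) :
    (of x * v * of y * v⁻¹).norm = 2 * v.norm + 2 := by
  simp only [norm, toWord_of_mul_mul_of_mul_inv v hx hy, List.cons_append, List.length_cons,
    List.length_append, invRev_length]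
  ring

theorem exists_eq_mk_singleton_mul {v : FreeGroup α} {p : α × Bool} (hp : p ∈ v.toWord.head?) :
    ∃ w, v = mk [p] * w ∧ w.norm < v.norm := by
  obtain ⟨T, hT⟩ := List.head?_eq_some_iff.1 hp
  refine ⟨mk T, ?_, ?_⟩
  · rw [mul_mk, List.singleton_append, ← hT, mk_toWord]
  · exact norm_mk_le.trans_lt (by simp [norm, hT])

theorem exists_eq_mul_mk_singleton {v : FreeGroup α} {p : α × Bool}
    (hp : p ∈ v.toWord.getLast?) : ∃ w, v = w * mk [p] ∧ w.norm < v.norm := by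
  obtain ⟨T, hT⟩ := List.getLast?_eq_some_iff.1 hp
  refine ⟨mk T, ?_, ?_⟩
  · rw [mul_mk, ← hT, mk_toWord]
  · exact norm_mk_le.trans_lt (by simp [norm, hT])

theorem exists_eq_zpow_mul_mul_zpow (i j : α) (u : FreeGroup α) :
    ∃ (k m : ℤ) (v : FreeGroup α), u = of i ^ k * v * of j ^ m ∧
      (∀ p ∈ v.toWord.head?, p.1 ≠ i) ∧ (∀ p ∈ v.toWord.getLast?, p.1 ≠ j) := by
  obtain ⟨v, ⟨k, m, huv⟩, hmin⟩ := (measure fun v : FreeGroup α ↦ v.norm).wf.has_min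
    {v | ∃ k m : ℤ, u = of i ^ k * v * of j ^ m} ⟨u, 0, 0, by simp⟩
  refine ⟨k, m, v, huv, ?_, ?_⟩
  · rintro ⟨x, b⟩ hp rfl
    obtain ⟨w, rfl, hw⟩ := exists_eq_mk_singleton_mul hp
    obtain ⟨e, he⟩ := Subgroup.mem_zpowers_iff.1 (mk_singleton_mem_zpowers _ b)
    exact hmin w ⟨k + e, m, by rw [huv, ← he, zpow_add]; group⟩ hw
  · rintro ⟨x, b⟩ hp rfl
    obtain ⟨w, rfl, hw⟩ := exists_eq_mul_mk_singleton hp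
    obtain ⟨e, he⟩ := Subgroup.mem_zpowers_iff.1 (mk_singleton_mem_zpowers _ b)
    exact hmin w ⟨k, e + m, by rw [huv, ← he, zpow_add]; group⟩ hw

end FreeGroup

theorem freeGroup_conj_short_implies_power_general {α : Type*} [DecidableEq α]
    {i j : α} (u : FreeGroup α)
    (h : ∃ g : FreeGroup α, FreeGroup.norm g ≤ 2 ∧
      IsConj g (FreeGroup.of i * u * FreeGroup.of j * u⁻¹)) :
    ∃ k m : ℤ, u = FreeGroup.of i ^ k * FreeGroup.of j ^ m ∧
      u * FreeGroup.of j * u⁻¹ =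
        FreeGroup.of i ^ k * FreeGroup.of j * FreeGroup.of i ^ (-k) := by
  obtain ⟨g, hg, hconj⟩ := h
  obtain ⟨k, m, v, rfl, hi, hj⟩ := FreeGroup.exists_eq_zpow_mul_mul_zpow i j u
  have hconj_v : IsConj g (FreeGroup.of i * v * FreeGroup.of j * v⁻¹) :=
    hconj.trans (isConj_iff.2 ⟨FreeGroup.of i ^ (-k), by group⟩)
  have hle := FreeGroup.norm_le_of_isConj_of_isCyclicallyReduced hconj_v
    (FreeGroup.isCyclicallyReduced_toWord_of_mul_mul_of_mul_inv v hi hj)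
  rw [FreeGroup.norm_of_mul_mul_of_mul_inv v hi hj] at hle
  obtain rfl : v = 1 := FreeGroup.norm_eq_zero.1 (by omega)
  exact ⟨k, m, by group, by group⟩

/-- If `i ≠ j` and `(of i) * u * (of j) * u⁻¹` is conjugate to an element of
reduced word length at most `2`, then `u = (of i)^k * (of j)^m` for some
integers `k, m`; consequently
`u * (of j) * u⁻¹ = (of i)^k * (of j) * (of i)^(-k)`. -/
theorem freeGroup_conj_short_implies_power {α : Type*} [DecidableEq α]
    {i j : α} (hij : i ≠ j) (u : FreeGroup α)
    (h : ∃ g : FreeGroup α, FreeGroup.norm g ≤ 2 ∧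
      IsConj g (FreeGroup.of i * u * FreeGroup.of j * u⁻¹)) :
    ∃ k m : ℤ, u = FreeGroup.of i ^ k * FreeGroup.of j ^ m ∧
      u * FreeGroup.of j * u⁻¹ =
        FreeGroup.of i ^ k * FreeGroup.of j * FreeGroup.of i ^ (-k) :=
  freeGroup_conj_short_implies_power_general u h
end
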